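/- Let c and c' be two coefficient families, each with radius of convergence at least R for some R > 0, and suppose c(W) ≠ c'(W) for some word W of length n. Then for every k ≥ n+1 there exist k×k real matrices N_1,…,N_d, each tridiagonal antisymmetric, such that the families (c(V) · N_V)_{V a word} and (c'(V) · N_V)_{V a word} are both summable in the space of k×k real matrices and ∑'_V c(V) · N_V ≠ ∑'_V c'(V) · N_V. -/

import Mathlib

/-!
Take `N_j = ε • E_j`, where `E_j = U_j - U_jᵀ` and `U_j` has `(m, m+1)` entry `1` exactly when the
`m`-th letter of `W` is `j`. Products of such banded matrices only reach `|V|` steps above the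
diagonal, so the `(0, |W|)` entry of `E_V` vanishes for `|V| < |W|`, equals `[V = W]` for
`|V| = |W|` (the only path `0 → 1 → ⋯ → |W|` spells `W`), and is at most `k ^ |V|` in general.
Hence the `(0, |W|)` entry of `∑ (c V - c' V) • N_V` is `ε ^ |W| (c W - c' W + o(1))` as
`ε → 0⁺` by dominated convergence, and it is nonzero for small `ε > 0`.
-/

open Matrix

/-- A `k × k` real matrix is tridiagonal antisymmetric if `N + Nᵀ = 0` and its `(a,b)`-entry
vanishes whenever `|a - b| ≠ 1`. -/
def TriAnti {k : ℕ} (N : Matrix (Fin k) (Fin k) ℝ) : Prop :=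
  N + Nᵀ = 0 ∧ ∀ a b : Fin k, ((a : ℤ) - (b : ℤ)).natAbs ≠ 1 → N a b = 0

open Filter Topology

theorem List.prod_map_smul {ι M N : Type*} [Monoid M] [Monoid N] [MulAction M N]
    [IsScalarTower M N N] [SMulCommClass M N N] (m : M) (f : ι → N) (V : List ι) :
    (V.map (m • f)).prod = m ^ V.length • (V.map f).prod := by
  rw [← List.length_map (f := f), List.smul_prod, List.map_map]
  rfl

lemma Matrix.tsum_apply {ι m n α : Type*} [AddCommMonoid α] [TopologicalSpace α] [T2Space α]
    {f : ι → Matrix m n α} (hf : Summable f) (i : m) (j : n) :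
    (∑' x, f x) i j = ∑' x, f x i j :=
  (congrFun (_root_.tsum_apply hf) j).trans (_root_.tsum_apply (Pi.summable.1 hf i))

lemma TriAnti.smul {k : ℕ} {N : Matrix (Fin k) (Fin k) ℝ} (hN : TriAnti N) (r : ℝ) :
    TriAnti (r • N) :=
  ⟨by rw [transpose_smul, ← smul_add, hN.1, smul_zero],
    fun a b hab => by rw [Matrix.smul_apply, hN.2 a b hab, smul_zero]⟩

section BandedProducts

variable {ι R : Type*} {k : ℕ}

lemma list_prod_apply_eq_zero_of_lt [Semiring R] {M : ι → Matrix (Fin k) (Fin k) R}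
    (hM : ∀ j (a b : Fin k), (a : ℕ) + 1 < b → M j a b = 0) (L : List ι) {a b : Fin k}
    (hab : (a : ℕ) + L.length < b) : (L.map M).prod a b = 0 := by
  induction L generalizing a with
  | nil => exact one_apply_ne (by rintro rfl; simp at hab)
  | cons j L ih =>
    rw [List.map_cons, List.prod_cons, mul_apply]
    refine Finset.sum_eq_zero fun x _ => ?_
    rcases lt_or_ge ((a : ℕ) + 1) x with h | h
    · rw [hM j a x h, zero_mul]
    · rw [ih (by simp only [List.length_cons] at hab; omega), mul_zero]

lemma list_prod_apply_of_eq_add_length [CommSemiring R] {M : ι → Matrix (Fin k) (Fin k) R}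
    (hM : ∀ j (a b : Fin k), (a : ℕ) + 1 < b → M j a b = 0) (s : ι → ℕ → R)
    (hs : ∀ j (a b : Fin k), (b : ℕ) = a + 1 → M j a b = s j a) (L : List ι) {a b : Fin k}
    (hab : (b : ℕ) = a + L.length) :
    (L.map M).prod a b = ∏ i : Fin L.length, s L[i] (a + i) := by
  induction L generalizing a with
  | nil => simp [Fin.ext hab.symm]
  | cons j L ih =>
    have ha : (a : ℕ) + 1 < k := by simp only [List.length_cons] at hab; omega
    rw [List.map_cons, List.prod_cons, mul_apply, Finset.sum_eq_single ⟨a + 1, ha⟩,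
      hs j a _ rfl, ih (by simp only [List.length_cons] at hab ⊢; omega)]
    · simp [Fin.prod_univ_succ, add_assoc, add_comm 1]
    · intro x _ hx
      rcases lt_or_ge ((a : ℕ) + 1) x with h | h
      · rw [hM j a x h, zero_mul]
      · have : (x : ℕ) ≠ a + 1 := fun h' => hx (Fin.ext h')
        have hxb : (x : ℕ) + L.length < b := by simp only [List.length_cons] at hab; omega
        rw [list_prod_apply_eq_zero_of_lt hM L hxb, mul_zero]
    · simp

lemma abs_list_prod_apply_le {n : Type*} [Fintype n] [DecidableEq n]
    {M : ι → Matrix n n ℝ} {C : ℝ} (hC : 0 ≤ C) (hM : ∀ j a b, |M j a b| ≤ C) (L : List ι)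
    (a b : n) : |(L.map M).prod a b| ≤ (Fintype.card n * C) ^ L.length := by
  induction L generalizing a with
  | nil => by_cases h : a = b <;> simp [h, one_apply]
  | cons j L ih =>
    rw [List.map_cons, List.prod_cons, mul_apply]
    calc |∑ x, M j a x * (L.map M).prod x b|
        ≤ ∑ x, |M j a x| * |(L.map M).prod x b| :=
          (Finset.abs_sum_le_sum_abs _ _).trans_eq (by simp only [abs_mul])
      _ ≤ ∑ _x : n, C * ((Fintype.card n : ℝ) * C) ^ L.length :=
          Finset.sum_le_sum fun x _ => mul_le_mul (hM j a x) (ih x) (abs_nonneg _) hC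
      _ = (Fintype.card n * C) ^ (j :: L).length := by
          rw [Finset.sum_const, Finset.card_univ, nsmul_eq_mul, List.length_cons, pow_succ']
          ring

lemma summable_smul_list_prod {n : Type*} [Fintype n] [DecidableEq n]
    {M : ι → Matrix n n ℝ} {C r : ℝ} (hC : 0 ≤ C) (hM : ∀ j a b, |M j a b| ≤ C)
    (hCr : Fintype.card n * C ≤ r) {c : List ι → ℝ} (hc : Summable fun V => |c V| * r ^ V.length) :
    Summable fun V => c V • (V.map M).prod := by
  refine Pi.summable.2 fun a => Pi.summable.2 fun b => hc.of_norm_bounded fun V => ?_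
  rw [Real.norm_eq_abs, Matrix.smul_apply, smul_eq_mul, abs_mul]
  gcongr
  exact (abs_list_prod_apply_le hC hM V a b).trans (by gcongr)

end BandedProducts

section WordMatrix

variable {d : ℕ} (W : List (Fin d)) (k : ℕ) (j : Fin d)

def wordShift : Matrix (Fin k) (Fin k) ℝ :=
  of fun a b => if (b : ℕ) = a + 1 ∧ W[(a : ℕ)]? = some j then 1 else 0

def wordMatrix : Matrix (Fin k) (Fin k) ℝ :=
  wordShift W k j - (wordShift W k j)ᵀ

lemma wordMatrix_apply (a b : Fin k) :
    wordMatrix W k j a b = (if (b : ℕ) = a + 1 ∧ W[(a : ℕ)]? = some j then 1 else 0) -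
      if (a : ℕ) = b + 1 ∧ W[(b : ℕ)]? = some j then 1 else 0 :=
  rfl

lemma triAnti_wordMatrix : TriAnti (wordMatrix W k j) := by
  refine ⟨by simp [wordMatrix], fun a b hab => ?_⟩
  rw [wordMatrix_apply, if_neg (by omega), if_neg (by omega), sub_zero]

variable {W k j}

lemma wordMatrix_apply_of_lt {a b : Fin k} (hab : (a : ℕ) + 1 < b) :
    wordMatrix W k j a b = 0 := by
  rw [wordMatrix_apply, if_neg (by omega), if_neg (by omega), sub_zero]

lemma wordMatrix_apply_of_eq_add_one {a b : Fin k} (hab : (b : ℕ) = a + 1) :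
    wordMatrix W k j a b = if W[(a : ℕ)]? = some j then 1 else 0 := by
  rw [wordMatrix_apply, sub_eq_self.2 (if_neg (by omega))]
  simp [hab]

lemma abs_wordMatrix_apply_le (a b : Fin k) : |wordMatrix W k j a b| ≤ 1 := by
  rw [wordMatrix_apply]
  split_ifs <;> first | omega | norm_num

lemma wordMatrix_prod_apply_zero_length {V : List (Fin d)} (hk : W.length < k)
    (hV : V.length ≤ W.length) :
    (V.map (wordMatrix W k)).prod ⟨0, by omega⟩ ⟨W.length, hk⟩ = if V = W then 1 else 0 := by
  rcases hV.lt_or_eq with hlt | heq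
  · rw [list_prod_apply_eq_zero_of_lt (fun _ _ _ => wordMatrix_apply_of_lt) V (by simpa),
      if_neg (by rintro rfl; omega)]
  · rw [list_prod_apply_of_eq_add_length (fun _ _ _ => wordMatrix_apply_of_lt)
      (fun j m => if W[m]? = some j then 1 else 0)
      (fun _ _ _ => wordMatrix_apply_of_eq_add_one) V (by simp [heq]), Fintype.prod_boole]
    congr 1
    refine propext ⟨fun h => List.ext_getElem heq fun i hi _ => ?_, by rintro rfl; simp⟩
    have hi' := h ⟨i, hi⟩
    rw [zero_add, List.getElem?_eq_getElem (heq ▸ hi), Option.some_inj] at hi'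
    exact hi'.symm

end WordMatrix

lemma tendsto_tsum_mul_pow_sub {ι : Type*} {a : ι → ℝ} {ℓ : ι → ℕ} {R : ℝ} {n : ℕ}
    (hR : 0 < R) (ha : Summable fun i => |a i| * R ^ ℓ i) (hlow : ∀ i, ℓ i < n → a i = 0) :
    Tendsto (fun ε => ∑' i, a i * ε ^ (ℓ i - n)) (𝓝[>] 0)
      (𝓝 (∑' i, if ℓ i = n then a i else 0)) := by
  refine tendsto_tsum_of_dominated_convergence (ha.div_const (R ^ n)) (fun i => ?_) ?_
  · rcases (lt_trichotomy (ℓ i) n) with h | h | h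
    · simp [hlow i h]
    · simp [h]
    · have : Tendsto (fun ε : ℝ => a i * ε ^ (ℓ i - n)) (𝓝 0) (𝓝 (a i * 0 ^ (ℓ i - n))) :=
        (continuous_const.mul (continuous_pow _)).tendsto 0
      rw [zero_pow (by omega), mul_zero] at this
      simpa [h.ne'] using this.mono_left nhdsWithin_le_nhds
  · filter_upwards [Ioo_mem_nhdsGT hR] with ε hε i
    rcases lt_or_ge (ℓ i) n with h | h
    · simp [hlow i h]
    · rw [norm_mul, Real.norm_eq_abs, norm_pow, Real.norm_eq_abs, abs_of_pos hε.1, mul_div_assoc,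
        div_eq_mul_inv, ← pow_sub₀ _ hR.ne' h]
      gcongr
      exacts [hε.1.le, hε.2.le]

lemma eventually_tsum_mul_pow_ne_zero {ι : Type*} {a : ι → ℝ} {ℓ : ι → ℕ} {R : ℝ} {n : ℕ}
    (hR : 0 < R) (ha : Summable fun i => |a i| * R ^ ℓ i) (hlow : ∀ i, ℓ i < n → a i = 0)
    (hlead : ∑' i, (if ℓ i = n then a i else 0) ≠ 0) :
    ∀ᶠ ε in 𝓝[>] 0, ∑' i, a i * ε ^ ℓ i ≠ 0 := by
  filter_upwards [(tendsto_tsum_mul_pow_sub hR ha hlow).eventually_ne hlead,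
    self_mem_nhdsWithin] with ε hne hε
  have hfactor : ∀ i, a i * ε ^ ℓ i = ε ^ n * (a i * ε ^ (ℓ i - n)) := by
    intro i
    rcases lt_or_ge (ℓ i) n with h | h
    · simp [hlow i h]
    · rw [mul_left_comm, ← pow_add, Nat.add_sub_cancel' h]
  simp_rw [hfactor, tsum_mul_left]
  exact mul_ne_zero (pow_ne_zero _ (ne_of_gt hε)) hne

lemma exists_tsum_mul_wordMatrix_prod_ne_zero {d k : ℕ} {W : List (Fin d)} (hk : W.length < k)
    {e : List (Fin d) → ℝ} {R : ℝ} (hR : 0 < R) (he : Summable fun V => |e V| * R ^ V.length)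
    (hW : e W ≠ 0) :
    ∃ ε, 0 < ε ∧ ε < R / k ∧
      ∑' V, e V * (V.map (ε • wordMatrix W k)).prod ⟨0, by omega⟩ ⟨W.length, hk⟩ ≠ 0 := by
  have hk₀ : (0 : ℝ) < k := by norm_cast; omega
  let a V := e V * (V.map (wordMatrix W k)).prod ⟨0, by omega⟩ ⟨W.length, hk⟩
  have ha : Summable fun V => |a V| * (R / k) ^ V.length := by
    refine he.of_nonneg_of_le (fun V => by positivity) fun V => ?_
    have hprod := abs_list_prod_apply_le (M := wordMatrix W k) zero_le_one
      (fun _ => abs_wordMatrix_apply_le) V ⟨0, by omega⟩ ⟨W.length, hk⟩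
    rw [Fintype.card_fin, mul_one] at hprod
    calc |a V| * (R / k) ^ V.length
        ≤ |e V| * (k ^ V.length * (R / k) ^ V.length) := by
          rw [abs_mul, mul_assoc]
          gcongr
      _ = |e V| * R ^ V.length := by rw [← mul_pow, mul_div_cancel₀ _ hk₀.ne']
  have hcoeff : ∀ V : List (Fin d), V.length ≤ W.length → a V = if V = W then e W else 0 := by
    intro V hV
    simp only [a, wordMatrix_prod_apply_zero_length hk hV]
    split_ifs with h <;> simp [h]
  have hlow : ∀ V : List (Fin d), V.length < W.length → a V = 0 := fun V hV => by
    rw [hcoeff V hV.le, if_neg (by rintro rfl; omega)]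
  have hlead : ∑' V, (if V.length = W.length then a V else 0) = e W := by
    refine (tsum_eq_single W fun V hV => ?_).trans ?_
    · split_ifs with h
      · rw [hcoeff V h.le, if_neg hV]
      · rfl
    · rw [if_pos rfl, hcoeff W le_rfl, if_pos rfl]
  obtain ⟨ε, hne, hε⟩ := ((eventually_tsum_mul_pow_ne_zero (div_pos hR hk₀) ha hlow
    (hlead ▸ hW)).and (Ioo_mem_nhdsGT (div_pos hR hk₀))).exists
  refine ⟨ε, hε.1, hε.2, ?_⟩
  convert hne using 3 with V
  rw [List.prod_map_smul, Matrix.smul_apply, smul_eq_mul]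
  ring

theorem stmt13_general (d : ℕ) (c c' : List (Fin d) → ℝ) (R : ℝ) (hR : 0 < R)
    (hc : Summable fun V : List (Fin d) => |c V| * R ^ V.length)
    (hc' : Summable fun V : List (Fin d) => |c' V| * R ^ V.length)
    (W : List (Fin d)) (hW : c W ≠ c' W) (k : ℕ) (hk : W.length + 1 ≤ k) :
    ∃ N : Fin d → Matrix (Fin k) (Fin k) ℝ,
      (∀ j, TriAnti (N j)) ∧
      Summable (fun V : List (Fin d) => c V • (V.map N).prod) ∧
      Summable (fun V : List (Fin d) => c' V • (V.map N).prod) ∧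
      (∑' V : List (Fin d), c V • (V.map N).prod) ≠
        ∑' V : List (Fin d), c' V • (V.map N).prod := by
  have hdiff : Summable fun V => |c V - c' V| * R ^ V.length :=
    (hc.add hc').of_nonneg_of_le (fun V => by positivity) fun V => by
      rw [← add_mul]; gcongr; exact abs_sub _ _
  obtain ⟨ε, hε₀, hεR, hne⟩ :=
    exists_tsum_mul_wordMatrix_prod_ne_zero hk hR hdiff (sub_ne_zero.2 hW)
  have hN : ∀ j a b, |(ε • wordMatrix W k) j a b| ≤ ε := fun j a b => by
    rw [Pi.smul_apply, Matrix.smul_apply, smul_eq_mul, abs_mul, abs_of_pos hε₀]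
    exact mul_le_of_le_one_right hε₀.le (abs_wordMatrix_apply_le a b)
  have hkε : (Fintype.card (Fin k) : ℝ) * ε ≤ R := by
    rw [Fintype.card_fin, ← le_div_iff₀' (by norm_cast; omega)]
    exact hεR.le
  have hs := summable_smul_list_prod hε₀.le hN hkε hc
  have hs' := summable_smul_list_prod hε₀.le hN hkε hc'
  refine ⟨ε • wordMatrix W k, fun j => (triAnti_wordMatrix W k j).smul ε, hs, hs',
    fun heq => hne ?_⟩
  have hentry : (∑' V, (c V • (V.map (ε • wordMatrix W k)).prod -
      c' V • (V.map (ε • wordMatrix W k)).prod)) ⟨0, by omega⟩ ⟨W.length, hk⟩ = 0 := by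
    rw [hs.tsum_sub hs', heq, sub_self, Matrix.zero_apply]
  rw [Matrix.tsum_apply (hs.sub hs')] at hentry
  simpa only [Matrix.sub_apply, Matrix.smul_apply, smul_eq_mul, sub_mul] using hentry

/-- if two coefficient families `c`, `c'` with radius of convergence at least
`R > 0` differ at a word `W` of length `n`, then for every `k ≥ n + 1` there are tridiagonal
antisymmetric `k × k` real matrices `N_1, …, N_d` such that both `(c(V) • N_V)_V` and
`(c'(V) • N_V)_V` are summable and their sums differ. -/
theorem stmt13 (d : ℕ) (hd : 0 < d) (c c' : List (Fin d) → ℝ) (R : ℝ) (hR : 0 < R)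
    (hc : Summable fun V : List (Fin d) => |c V| * R ^ V.length)
    (hc' : Summable fun V : List (Fin d) => |c' V| * R ^ V.length)
    (W : List (Fin d)) (hW : c W ≠ c' W) (k : ℕ) (hk : W.length + 1 ≤ k) :
    ∃ N : Fin d → Matrix (Fin k) (Fin k) ℝ,
      (∀ j, TriAnti (N j)) ∧
      Summable (fun V : List (Fin d) => c V • (V.map N).prod) ∧
      Summable (fun V : List (Fin d) => c' V • (V.map N).prod) ∧
      (∑' V : List (Fin d), c V • (V.map N).prod) ≠
        ∑' V : List (Fin d), c' V • (V.map N).prod :=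
  stmt13_general d c c' R hR hc hc' W hW k hk
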